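/- arXiv:2311.11115 — 8 statements merged into one kernel-verified Lean document; each statement's English description precedes it below -/
import Mathlib

section
/- If R is a G-graded NR-clean ring, then the identity component R_e is an NR-clean ring. -/
/-!
Write `a ∈ R_e` as `r + n` with `r` graded-regular and `n` homogeneous nilpotent, and project
onto `R_e`. The `e`-component of a homogeneous element is the element itself or `0`, so the
components of `r` and `n` are again regular and nilpotent. The regularity witness can be taken
in `R_e`: if `r = r a r` with `r ∈ R_e` and `a ∈ R_g`, `g ≠ e`, then also `r ∈ R_g`, so `r = 0`.
-/

/-- An element is homogeneous w.r.t. a grading family `𝒜` if it lies in some component. -/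
def Homogeneous {G : Type*} [Group G] {R : Type*} [Ring R]
    (𝒜 : G → AddSubgroup R) (x : R) : Prop := ∃ g, x ∈ 𝒜 g

/-- A graded-regular element: homogeneous `r` with `r = r * a * r` for some homogeneous `a`. -/
def GradedRegular {G : Type*} [Group G] {R : Type*} [Ring R]
    (𝒜 : G → AddSubgroup R) (r : R) : Prop :=
  Homogeneous 𝒜 r ∧ ∃ a : R, Homogeneous 𝒜 a ∧ r = r * a * r

/-- Graded NR-clean: every homogeneous element is a sum of a graded-regular element
and a homogeneous nilpotent element. -/
def GradedNRClean {G : Type*} [Group G] {R : Type*} [Ring R]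
    (𝒜 : G → AddSubgroup R) : Prop :=
  ∀ x : R, Homogeneous 𝒜 x →
    ∃ r n : R, GradedRegular 𝒜 r ∧ Homogeneous 𝒜 n ∧ IsNilpotent n ∧ x = r + n

/-- `𝒜` is a `G`-grading of the ring `R`. -/
structure IsGrading {G : Type*} [Group G] [DecidableEq G] {R : Type*} [Ring R]
    (𝒜 : G → AddSubgroup R) : Prop where
  one_mem : (1 : R) ∈ 𝒜 1
  mul_mem : ∀ {g h : G} {a b : R}, a ∈ 𝒜 g → b ∈ 𝒜 h → a * b ∈ 𝒜 (g * h)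
  isInternal : DirectSum.IsInternal 𝒜


section Projection

variable {ι R : Type*} [DecidableEq ι] [Ring R] {𝒜 : ι → AddSubgroup R}
  [DirectSum.Decomposition 𝒜]

theorem decompose_coe_eq_self_or_eq_zero {x : R} {i : ι} (hx : x ∈ 𝒜 i) (j : ι) :
    (DirectSum.decompose 𝒜 x j : R) = x ∨ (DirectSum.decompose 𝒜 x j : R) = 0 := by
  by_cases hij : i = j
  · subst hij
    exact .inl (DirectSum.decompose_of_mem_same 𝒜 hx)
  · exact .inr (DirectSum.decompose_of_mem_ne 𝒜 hx hij)

end Projection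

namespace IsGrading

variable {G R : Type*} [Group G] [DecidableEq G] [Ring R] {𝒜 : G → AddSubgroup R}

theorem eq_zero_of_mem_of_mem (hG : IsGrading 𝒜) {g h : G} (hgh : g ≠ h) {x : R}
    (hg : x ∈ 𝒜 g) (hh : x ∈ 𝒜 h) : x = 0 :=
  AddSubgroup.disjoint_def.mp (hG.isInternal.addSubgroup_iSupIndep.pairwiseDisjoint hgh) hg hh

theorem exists_mem_inv_eq_mul_mul (hG : IsGrading 𝒜) {g g' : G} {r a : R} (hr : r ∈ 𝒜 g)
    (ha : a ∈ 𝒜 g') (hra : r = r * a * r) : ∃ x ∈ 𝒜 g⁻¹, r = r * x * r := by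
  by_cases hg' : g' = g⁻¹
  · exact ⟨a, hg' ▸ ha, hra⟩
  · have hr' : r ∈ 𝒜 (g * g' * g) := hra ▸ hG.mul_mem (hG.mul_mem hr ha) hr
    have hne : g * g' * g ≠ g := fun h =>
      hg' (eq_inv_of_mul_eq_one_left (by simpa [mul_assoc] using h))
    have hr0 : r = 0 := hG.eq_zero_of_mem_of_mem hne hr' hr
    exact ⟨0, zero_mem _, by simp [hr0]⟩

end IsGrading

/-- If `R` is a `G`-graded NR-clean ring, then the identity component `R_e`
is an NR-clean ring (regular and nilpotent witnesses lying in `R_e`, with the regularity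
witness in `R_e` as well). -/
theorem stmt0 {G : Type*} [Group G] [DecidableEq G] {R : Type*} [Ring R]
    (𝒜 : G → AddSubgroup R) (hG : IsGrading 𝒜) (h : GradedNRClean 𝒜) :
    ∀ a ∈ 𝒜 1, ∃ r n : R, r ∈ 𝒜 1 ∧ n ∈ 𝒜 1 ∧ (∃ x ∈ 𝒜 1, r = r * x * r) ∧
      IsNilpotent n ∧ a = r + n := by
  intro a ha
  let := hG.isInternal.chooseDecomposition
  obtain ⟨r, n, ⟨⟨g, hr⟩, b, ⟨g', hb⟩, hrb⟩, ⟨k, hn⟩, hnil, rfl⟩ := h a ⟨1, ha⟩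
  refine ⟨DirectSum.decompose 𝒜 r 1, DirectSum.decompose 𝒜 n 1, SetLike.coe_mem _,
    SetLike.coe_mem _, ?_, ?_, ?_⟩
  · rcases decompose_coe_eq_self_or_eq_zero hr 1 with hr1 | hr1 <;> rw [hr1]
    · have hr : r ∈ 𝒜 1 := hr1 ▸ SetLike.coe_mem _
      simpa only [inv_one] using hG.exists_mem_inv_eq_mul_mul hr hb hrb
    · exact ⟨0, zero_mem _, by simp⟩
  · rcases decompose_coe_eq_self_or_eq_zero hn 1 with hn1 | hn1 <;> rw [hn1]
    exacts [hnil, .zero]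
  · rw [← DirectSum.decompose_of_mem_same 𝒜 ha, DirectSum.decompose_add]
    rfl
end

section
/- A finite direct product R = ∏_{i=1}^k R_i of G-graded rings (with componentwise grading) is graded NR-clean if and only if each R_i is graded NR-clean. -/
open DirectSum

namespace IsGrading

variable {G : Type*} [Group G] [DecidableEq G] {R : Type*} [Ring R] {𝒜 : G → AddSubgroup R}

theorem degree_eq_of_mem_mem (hA : IsGrading 𝒜) {p q : G} {x : R} (hp : x ∈ 𝒜 p)
    (hq : x ∈ 𝒜 q) (hx : x ≠ 0) : p = q :=
  let := hA.isInternal.chooseDecomposition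
  DirectSum.degree_eq_of_mem_mem 𝒜 hp hq hx

/-- If `r = r * a * r` with `r` of degree `g` and `a` of degree `h`, then `r` also has degree
`g * h * g`, which forces `h = g⁻¹` unless `r = 0`. -/
theorem exists_mem_inv_of_eq_mul_mul (hA : IsGrading 𝒜) {g : G} {r a : R} (hr : r ∈ 𝒜 g)
    (ha : Homogeneous 𝒜 a) (hra : r = r * a * r) : ∃ b ∈ 𝒜 g⁻¹, r = r * b * r := by
  obtain rfl | hr0 := eq_or_ne r 0
  · exact ⟨0, zero_mem _, by simp⟩
  obtain ⟨h, ha⟩ := ha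
  have hghg : g * h * g = g :=
    hA.degree_eq_of_mem_mem (hra ▸ hA.mul_mem (hA.mul_mem hr ha) hr) hr hr0
  have hh : h = g⁻¹ := eq_inv_of_mul_eq_one_right (mul_eq_right.mp hghg)
  exact ⟨a, hh ▸ ha, hra⟩

theorem exists_mem_inv_decompose (hA : IsGrading 𝒜) [Decomposition 𝒜] {r : R}
    (hr : GradedRegular 𝒜 r) (g : G) :
    ∃ b ∈ 𝒜 g⁻¹, (decompose 𝒜 r g : R) = decompose 𝒜 r g * b * decompose 𝒜 r g := by
  obtain ⟨⟨p, hp⟩, a, ha, hra⟩ := hr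
  obtain rfl | hpg := eq_or_ne p g
  · rw [decompose_of_mem_same 𝒜 hp]
    exact hA.exists_mem_inv_of_eq_mul_mul hp ha hra
  · rw [decompose_of_mem_ne 𝒜 hp hpg]
    exact ⟨0, zero_mem _, by simp⟩

end IsGrading

theorem IsNilpotent.decompose {ι R : Type*} [DecidableEq ι] [Ring R] {𝒜 : ι → AddSubgroup R}
    [Decomposition 𝒜] {n : R} {p : ι} (hn : n ∈ 𝒜 p) (hnil : IsNilpotent n) (g : ι) :
    IsNilpotent (decompose 𝒜 n g : R) := by
  obtain rfl | hpg := eq_or_ne p g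
  · rwa [decompose_of_mem_same 𝒜 hn]
  · rw [decompose_of_mem_ne 𝒜 hn hpg]
    exact IsNilpotent.zero

theorem Pi.isNilpotent_of_forall {ι : Type*} [Finite ι] {R : ι → Type*}
    [∀ i, MonoidWithZero (R i)] {x : ∀ i, R i} (hx : ∀ i, IsNilpotent (x i)) :
    IsNilpotent x := by
  have := Fintype.ofFinite ι
  choose m hm using hx
  exact ⟨Finset.univ.sup m, funext fun i =>
    pow_eq_zero_of_le (Finset.le_sup (Finset.mem_univ i)) (hm i)⟩

namespace GradedNRClean

variable {G : Type*} [Group G]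

theorem exists_add_of_mem [DecidableEq G] {R : Type*} [Ring R] {𝒜 : G → AddSubgroup R}
    (hA : IsGrading 𝒜) (hC : GradedNRClean 𝒜) {g : G} {x : R} (hx : x ∈ 𝒜 g) :
    ∃ r n : R, r ∈ 𝒜 g ∧ (∃ a ∈ 𝒜 g⁻¹, r = r * a * r) ∧ n ∈ 𝒜 g ∧ IsNilpotent n ∧
      x = r + n := by
  let := hA.isInternal.chooseDecomposition
  obtain ⟨r, n, hr, ⟨q, hn⟩, hnil, rfl⟩ := hC x ⟨g, hx⟩
  refine ⟨decompose 𝒜 r g, decompose 𝒜 n g, SetLike.coe_mem _,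
    hA.exists_mem_inv_decompose hr g, SetLike.coe_mem _, hnil.decompose hn g, ?_⟩
  rw [← decompose_of_mem_same 𝒜 hx, decompose_add, DirectSum.add_apply, AddMemClass.coe_add]

variable {ι : Type*} {A : ι → Type*} [∀ i, Ring (A i)] {𝒜 : ∀ i, G → AddSubgroup (A i)}

theorem of_pi [DecidableEq ι] (hC : GradedNRClean fun g => AddSubgroup.pi Set.univ fun i => 𝒜 i g)
    (i : ι) : GradedNRClean (𝒜 i) := by
  rintro x ⟨g, hx⟩
  obtain ⟨r, n, ⟨⟨p, hr⟩, a, ⟨h, ha⟩, hra⟩, ⟨q, hn⟩, hnil, hxrn⟩ :=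
    hC (Pi.single i x) ⟨g, (AddSubgroup.single_mem_pi i x).mpr fun _ => hx⟩
  refine ⟨r i, n i, ⟨⟨p, hr i trivial⟩, a i, ⟨h, ha i trivial⟩, congr_fun hra i⟩,
    ⟨q, hn i trivial⟩, hnil.map (Pi.evalRingHom A i), ?_⟩
  simpa using congr_fun hxrn i

theorem pi [Finite ι] [DecidableEq G] (hA : ∀ i, IsGrading (𝒜 i))
    (hC : ∀ i, GradedNRClean (𝒜 i)) :
    GradedNRClean fun g => AddSubgroup.pi Set.univ fun i => 𝒜 i g := by
  rintro x ⟨g, hx⟩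
  choose r n hr hreg hn hnil hxrn using fun i => (hC i).exists_add_of_mem (hA i) (hx i trivial)
  choose a ha hra using hreg
  exact ⟨r, n, ⟨⟨g, fun i _ => hr i⟩, a, ⟨g⁻¹, fun i _ => ha i⟩, funext hra⟩,
    ⟨g, fun i _ => hn i⟩, Pi.isNilpotent_of_forall hnil, funext hxrn⟩

end GradedNRClean

/-- A finite direct product of `G`-graded rings (with componentwise grading)
is graded NR-clean iff each factor is graded NR-clean. -/
theorem stmt4 {G : Type*} [Group G] [DecidableEq G] {k : ℕ} (A : Fin k → Type*)
    [∀ i, Ring (A i)] (𝒜 : ∀ i, G → AddSubgroup (A i)) (hA : ∀ i, IsGrading (𝒜 i)) :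
    GradedNRClean (fun g => AddSubgroup.pi Set.univ fun i => 𝒜 i g) ↔
      ∀ i, GradedNRClean (𝒜 i) :=
  ⟨GradedNRClean.of_pi, GradedNRClean.pi hA⟩
end

section
/- Let R be a G-graded ring such that every graded-regular element of R is central and the only idempotents of R_e are 0 and 1. If R is graded NR-clean, then R is graded nil-good, i.e., every homogeneous element is either nilpotent or a sum of a homogeneous unit and a homogeneous nilpotent. -/
theorem Commute.eq_zero_or_isUnit_of_mul_mul_eq_self {R : Type*} [Ring R] {r a : R}
    (hcomm : Commute r a) (hr : r * a * r = r) (hra : r * a = 0 ∨ r * a = 1) :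
    r = 0 ∨ IsUnit r := by
  rcases hra with h0 | h1
  · exact .inl (by rw [← hr, h0, zero_mul])
  · exact .inr ⟨⟨r, a, h1, hcomm.eq ▸ h1⟩, rfl⟩

section Grading

variable {G : Type*} [Group G] [DecidableEq G] {R : Type*} [Ring R] {𝒜 : G → AddSubgroup R}

theorem IsGrading.eq_zero_of_mem_of_mem_s5 (hG : IsGrading 𝒜) {g h : G} (hgh : g ≠ h) {x : R}
    (hg : x ∈ 𝒜 g) (hh : x ∈ 𝒜 h) : x = 0 :=
  AddSubgroup.disjoint_def.mp (hG.isInternal.addSubgroup_iSupIndep.pairwiseDisjoint hgh) hg hh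

theorem IsGrading.mem_one_of_isIdempotentElem (hG : IsGrading 𝒜) {g : G} {e : R}
    (he : IsIdempotentElem e) (hg : e ∈ 𝒜 g) : e ∈ 𝒜 1 := by
  by_cases hg1 : g = 1
  · exact hg1 ▸ hg
  · have hgg : g ≠ g * g := fun h ↦ hg1 (by simpa using h.symm)
    rw [hG.eq_zero_of_mem_of_mem_s5 hgg hg (he ▸ hG.mul_mem hg hg)]
    exact zero_mem _

theorem GradedRegular.eq_zero_or_isUnit (hG : IsGrading 𝒜)
    (hidem : ∀ x ∈ 𝒜 1, x * x = x → x = 0 ∨ x = 1) {r : R} (hreg : GradedRegular 𝒜 r)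
    (hr : r ∈ Set.center R) : r = 0 ∨ IsUnit r := by
  obtain ⟨⟨g, hrg⟩, a, ⟨k, hak⟩, hrar⟩ := hreg
  have hidem_ra : IsIdempotentElem (r * a) := by
    rw [IsIdempotentElem, ← mul_assoc, ← hrar]
  exact (hr.comm a).eq_zero_or_isUnit_of_mul_mul_eq_self hrar.symm
    (hidem _ (hG.mem_one_of_isIdempotentElem hidem_ra (hG.mul_mem hrg hak)) hidem_ra)

end Grading

/-- If every graded-regular element is central and `0, 1` are the only
idempotents of `R_e`, then graded NR-clean implies graded nil-good. -/
theorem stmt5 {G : Type*} [Group G] [DecidableEq G] {R : Type*} [Ring R]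
    (𝒜 : G → AddSubgroup R) (hG : IsGrading 𝒜)
    (hcentral : ∀ r : R, GradedRegular 𝒜 r → r ∈ Set.center R)
    (hidem : ∀ x ∈ 𝒜 1, x * x = x → x = 0 ∨ x = 1)
    (h : GradedNRClean 𝒜) :
    ∀ x : R, Homogeneous 𝒜 x → IsNilpotent x ∨
      ∃ u n : R, IsUnit u ∧ Homogeneous 𝒜 u ∧ IsNilpotent n ∧ Homogeneous 𝒜 n ∧
        x = u + n := by
  intro x hx
  obtain ⟨r, n, hreg, hn, hnil, rfl⟩ := h x hx
  rcases hreg.eq_zero_or_isUnit hG hidem (hcentral r hreg) with rfl | hunit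
  · exact .inl (by rwa [zero_add])
  · exact .inr ⟨r, n, hunit, hreg.1, hnil, hn, rfl⟩
end

section
/- Let I be a graded-nil two-sided homogeneous ideal of a G-graded ring R. Then every graded-regular element of R/I lifts to a graded-regular element of R: if x ∈ R_g satisfies x ≡ x y x (mod I) for some y ∈ R_{g⁻¹}, then there exists a graded-regular z ∈ R_g with z − x ∈ I. -/
/-!
With `e = y * x`, the element `e - e ^ 2 = y * (x - x * y * x)` lies in `I` and has degree `1`,
so it is nilpotent, say `(e - e ^ 2) ^ m = 0`. Then `f = 1 - (1 - e ^ m) ^ m` is an idempotent of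
degree `1` congruent to `e` modulo `I`. Having no constant term as a polynomial in `e`,
`f = s * e` with `s` of degree `1`, and `z = x * f` is regular with inner inverse `s * y`:
`z * (s * y) * z = x * (f * (s * e) * f) = x * f`.
-/

open Finset

lemma one_sub_one_sub_pow_succ_pow_succ_eq_mul {R : Type*} [Ring R] (x : R) (n : ℕ) :
    1 - (1 - x ^ (n + 1)) ^ (n + 1) = (∑ i ∈ range (n + 1), (1 - x ^ (n + 1)) ^ i) * x ^ n * x := by
  rw [mul_assoc, ← pow_succ, ← geom_sum_mul_neg, sub_sub_cancel]

lemma IsIdempotentElem.one_sub_one_sub_pow_succ_pow_succ {R : Type*} [Ring R] {e : R}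
    (he : IsIdempotentElem e) (n : ℕ) : 1 - (1 - e ^ (n + 1)) ^ (n + 1) = e := by
  rw [he.pow_succ_eq, he.one_sub.pow_succ_eq, sub_sub_cancel]

lemma TwoSidedIdeal.one_sub_one_sub_pow_succ_pow_succ_sub_mem {R : Type*} [Ring R]
    {I : TwoSidedIdeal R} {e : R} (he : e - e ^ 2 ∈ I) (n : ℕ) :
    1 - (1 - e ^ (n + 1)) ^ (n + 1) - e ∈ I := by
  have hmod : ∀ a b : R, I.ringCon.mk' a = I.ringCon.mk' b ↔ a - b ∈ I :=
    fun a b => (RingCon.eq _).trans (I.rel_iff a b)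
  have hidem : IsIdempotentElem (I.ringCon.mk' e) := by
    rw [IsIdempotentElem, ← map_mul, hmod, ← sq, ← neg_sub]
    exact I.neg_mem he
  rw [← hmod]
  simpa only [map_sub, map_one, map_pow] using hidem.one_sub_one_sub_pow_succ_pow_succ n

lemma IsIdempotentElem.mul_mul_mul_eq_of_eq_mul_mul {R : Type*} [Ring R] {x y s f : R}
    (hf : IsIdempotentElem f) (hfs : f = s * (y * x)) : x * f * (s * y) * (x * f) = x * f := by
  calc x * f * (s * y) * (x * f) = x * (f * (s * (y * x)) * f) := by noncomm_ring
    _ = x * f := by rw [← hfs, hf.eq, hf.eq]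

def IsGrading.degreeOneSubring {G : Type*} [Group G] [DecidableEq G] {R : Type*} [Ring R]
    {𝒜 : G → AddSubgroup R} (hG : IsGrading 𝒜) : Subring R where
  __ := 𝒜 1
  one_mem' := hG.one_mem
  mul_mem' ha hb := by simpa using hG.mul_mem ha hb

theorem stmt6_general {G : Type*} [Group G] [DecidableEq G] {R : Type*} [Ring R]
    (𝒜 : G → AddSubgroup R) (hG : IsGrading 𝒜) (I : TwoSidedIdeal R)
    (hnil : ∀ a ∈ I, Homogeneous 𝒜 a → IsNilpotent a)
    (g : G) (x y : R) (hx : x ∈ 𝒜 g) (hy : y ∈ 𝒜 g⁻¹)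
    (hxy : x - x * y * x ∈ I) :
    ∃ z : R, z ∈ 𝒜 g ∧ GradedRegular 𝒜 z ∧ z - x ∈ I := by
  set R₁ := hG.degreeOneSubring
  have he : y * x ∈ R₁ := show y * x ∈ 𝒜 1 by simpa using hG.mul_mem hy hx
  have heI : y * x - (y * x) ^ 2 ∈ I := by
    rw [show y * x - (y * x) ^ 2 = y * (x - x * y * x) by noncomm_ring]
    exact I.mul_mem_left _ _ hxy
  obtain ⟨n, hn⟩ := hnil _ heI ⟨1, R₁.sub_mem he (R₁.pow_mem he 2)⟩
  set u := 1 - (y * x) ^ (n + 1)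
  set s := (∑ i ∈ range (n + 1), u ^ i) * (y * x) ^ n
  set f := 1 - u ^ (n + 1)
  have hu : u ∈ R₁ := R₁.sub_mem R₁.one_mem (R₁.pow_mem he _)
  have hs : s ∈ 𝒜 1 := R₁.mul_mem (R₁.sum_mem fun i _ => R₁.pow_mem hu i) (R₁.pow_mem he n)
  have hz : x * f ∈ 𝒜 g := by simpa using hG.mul_mem hx (R₁.sub_mem R₁.one_mem (R₁.pow_mem hu _))
  have hf : IsIdempotentElem f :=
    isIdempotentElem_one_sub_one_sub_pow_pow _ _ (by rw [pow_succ, hn, zero_mul])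
  have hfs : f = s * (y * x) := one_sub_one_sub_pow_succ_pow_succ_eq_mul _ n
  refine ⟨x * f, hz, ⟨⟨g, hz⟩, s * y, ⟨g⁻¹, by simpa using hG.mul_mem hs hy⟩,
    (hf.mul_mul_mul_eq_of_eq_mul_mul hfs).symm⟩, ?_⟩
  rw [show x * f - x = x * (f - y * x) - (x - x * y * x) by noncomm_ring]
  exact I.sub_mem (I.mul_mem_left _ _ (I.one_sub_one_sub_pow_succ_pow_succ_sub_mem heI n)) hxy

/-- Graded-regular elements lift modulo a graded-nil homogeneous
two-sided ideal. -/
theorem stmt6 {G : Type*} [Group G] [DecidableEq G] {R : Type*} [Ring R]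
    (𝒜 : G → AddSubgroup R) (hG : IsGrading 𝒜) (I : TwoSidedIdeal R)
    (hIhom : ∃ S : Set R, (∀ s ∈ S, Homogeneous 𝒜 s) ∧ I = TwoSidedIdeal.span S)
    (hnil : ∀ a ∈ I, Homogeneous 𝒜 a → IsNilpotent a)
    (g : G) (x y : R) (hx : x ∈ 𝒜 g) (hy : y ∈ 𝒜 g⁻¹)
    (hxy : x - x * y * x ∈ I) :
    ∃ z : R, z ∈ 𝒜 g ∧ GradedRegular 𝒜 z ∧ z - x ∈ I :=
  stmt6_general 𝒜 hG I hnil g x y hx hy hxy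
end

section
/- Let R be a G-graded NR-clean ring with finite support, where the graded Jacobson radical J^g(R) is contained in J(R) and every homogeneous nilpotent summand in an NR-clean decomposition of an element of J^g(R) lies in J^g(R). Then J^g(R) is graded-nil: every homogeneous element of J^g(R) is nilpotent. -/
/-- A right ideal of `R`, given as a set. -/
def IsRightIdealSet {R : Type*} [Ring R] (S : Set R) : Prop :=
  (0 : R) ∈ S ∧ (∀ a ∈ S, ∀ b ∈ S, a + b ∈ S) ∧ (∀ a ∈ S, -a ∈ S) ∧
    ∀ a ∈ S, ∀ r : R, a * r ∈ S

/-- A homogeneous (graded) right ideal: a right ideal generated by homogeneous elements. -/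
def IsHomogeneousRightIdeal {G : Type*} [Group G] {R : Type*} [Ring R]
    (𝒜 : G → AddSubgroup R) (S : Set R) : Prop :=
  IsRightIdealSet S ∧ ∃ T : Set R, (∀ t ∈ T, Homogeneous 𝒜 t) ∧
    S = ⋂₀ {U : Set R | IsRightIdealSet U ∧ T ⊆ U}

/-- A graded-maximal right ideal: a proper homogeneous right ideal contained in no other
proper homogeneous right ideal. -/
def IsGradedMaximalRightIdeal {G : Type*} [Group G] {R : Type*} [Ring R]
    (𝒜 : G → AddSubgroup R) (S : Set R) : Prop :=
  IsHomogeneousRightIdeal 𝒜 S ∧ S ≠ Set.univ ∧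
    ∀ U : Set R, IsHomogeneousRightIdeal 𝒜 U → U ≠ Set.univ → S ⊆ U → U = S

/-- The graded Jacobson radical: the intersection of all graded-maximal right ideals. -/
def gradedJacobson {G : Type*} [Group G] {R : Type*} [Ring R]
    (𝒜 : G → AddSubgroup R) : Set R :=
  ⋂₀ {S : Set R | IsGradedMaximalRightIdeal 𝒜 S}

/-- For a graded NR-clean ring of finite support (given that
`J^g(R) ⊆ J(R)` and that homogeneous nilpotent summands of NR-clean decompositions of
elements of `J^g(R)` lie in `J^g(R)`), the graded Jacobson radical is graded-nil. -/
theorem stmt9 {G : Type*} [Group G] [DecidableEq G] {R : Type*} [Ring R]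
    (𝒜 : G → AddSubgroup R) (hG : IsGrading 𝒜)
    (hfin : {g : G | 𝒜 g ≠ ⊥}.Finite) (h : GradedNRClean 𝒜)
    (hJ : gradedJacobson 𝒜 ⊆ (Ideal.jacobson (⊥ : Ideal R) : Set R))
    (hknown : ∀ a ∈ gradedJacobson 𝒜, Homogeneous 𝒜 a →
      ∀ r n : R, GradedRegular 𝒜 r → Homogeneous 𝒜 n → IsNilpotent n → a = r + n →
        n ∈ gradedJacobson 𝒜) :
    ∀ a ∈ gradedJacobson 𝒜, Homogeneous 𝒜 a → IsNilpotent a := by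
  intro a ha hhom
  obtain ⟨r, n, hr, hn, hniln, heq⟩ := h a hhom
  have hnJ : n ∈ gradedJacobson 𝒜 := hknown a ha hhom r n hr hn hniln heq
  have hrJ : r ∈ gradedJacobson 𝒜 := by
    intro S hS
    have hideal := hS.1.1
    have ha' := ha S hS
    have hn' := hnJ S hS
    have : a + -n ∈ S := hideal.2.1 a ha' (-n) (hideal.2.2.1 n hn')
    have hr' : r = a + -n := by rw [heq]; abel
    rwa [hr']
  have hrJac : r ∈ Ideal.jacobson (⊥ : Ideal R) := hJ hrJ
  obtain ⟨_, b, hb, hrb⟩ := hr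
  obtain ⟨z, hz⟩ := Ideal.mem_jacobson_iff.mp hrJac (-b)
  rw [Ideal.mem_bot, sub_eq_zero] at hz
  -- hz : z * -b * r + z = 1
  have hz1 : z * (1 - b * r) = 1 := by
    have e : z * (1 - b * r) = z * -b * r + z := by noncomm_ring
    rw [e, hz]
  have hj : z * b * r ∈ Ideal.jacobson (⊥ : Ideal R) :=
    Ideal.mul_mem_left _ (z * b) hrJac
  obtain ⟨w, hw⟩ := Ideal.mem_jacobson_iff.mp hj 1
  rw [Ideal.mem_bot, sub_eq_zero] at hw
  -- hw : w * 1 * (z * b * r) + w = 1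
  have hwz : w * z = 1 := by
    have hzj : z = 1 + z * b * r := by
      have e : z = z * -b * r + z + z * b * r := by noncomm_ring
      rwa [hz] at e
    calc w * z = w * (1 + z * b * r) := by rw [← hzj]
    _ = w * 1 * (z * b * r) + w := by noncomm_ring
    _ = 1 := hw
  have hzu : (1 - b * r) * z = 1 := by
    have hwv : w = 1 - b * r := by
      calc w = w * (z * (1 - b * r)) := by rw [hz1, mul_one]
      _ = (w * z) * (1 - b * r) := by rw [mul_assoc]
      _ = 1 - b * r := by rw [hwz, one_mul]
    rw [← hwv]; exact hwz
  have hr0 : r = 0 := by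
    calc r = r * ((1 - b * r) * z) := by rw [hzu, mul_one]
    _ = (r - r * b * r) * z := by noncomm_ring
    _ = 0 := by rw [← hrb, sub_self, zero_mul]
  rw [heq, hr0, zero_add]
  exact hniln
end

section
/- Let R be a G-graded ring and f a central homogeneous idempotent of R. Then R is graded NR-clean if and only if both corner rings fR and (1−f)R (with their induced G-gradings) are graded NR-clean. -/
/-!
Write `x = f x + (1 - f) x`. Since `f` is central, the corners `fR` and `(1 - f)R` annihilate
each other, so decompositions of the two summands in their corners add up to one of `x`: the sum
of the regular parts is regular with the sum of the inner inverses, and the nilpotent parts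
commute. For the sum to be homogeneous, both decompositions must live in the degree `g` of `x`,
with inner inverses of degree `g⁻¹`. Independence of the components allows this normalisation:
projecting `x = r + n` to degree `g` forces `x = 0` unless `r` or `n` has degree `g`, and
`r = r a r ≠ 0` with `r` of degree `g` forces `a` to have degree `g⁻¹`.
Conversely, multiplying a decomposition in `R` by `f` gives one in `fR`.
-/

section

variable {G : Type*} [Group G] {R : Type*} [Ring R]

/-- The components of a grading of the non-unital subring they span, such as the components
`eR_g` of a corner. -/
structure IsSubgrading (ℬ : G → AddSubgroup R) : Prop where
  mul_mem : ∀ {g h : G} {a b : R}, a ∈ ℬ g → b ∈ ℬ h → a * b ∈ ℬ (g * h)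
  iSupIndep : iSupIndep ℬ

lemma IsGrading.isSubgrading [DecidableEq G] {𝒜 : G → AddSubgroup R} (hG : IsGrading 𝒜) :
    IsSubgrading 𝒜 :=
  ⟨hG.mul_mem, hG.isInternal.addSubgroup_iSupIndep⟩

def HasGradedNRDecomp (ℬ : G → AddSubgroup R) (g : G) (x : R) : Prop :=
  ∃ r a n : R, r ∈ ℬ g ∧ a ∈ ℬ g⁻¹ ∧ n ∈ ℬ g ∧ r = r * a * r ∧ IsNilpotent n ∧ x = r + n

namespace IsSubgrading

variable {ℬ : G → AddSubgroup R}

lemma eq_zero_of_mem_of_mem (hℬ : IsSubgrading ℬ) {g h : G} (hgh : g ≠ h) {x : R}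
    (hg : x ∈ ℬ g) (hh : x ∈ ℬ h) : x = 0 :=
  AddSubgroup.disjoint_def.1 (hℬ.iSupIndep.pairwiseDisjoint hgh) hg hh

lemma mem_and_mem_or_eq_zero (hℬ : IsSubgrading ℬ) {g h m : G} {x r n : R} (hx : x ∈ ℬ g)
    (hr : r ∈ ℬ h) (hn : n ∈ ℬ m) (hxrn : x = r + n) : (r ∈ ℬ g ∧ n ∈ ℬ g) ∨ x = 0 := by
  by_cases hhg : h = g
  · subst hhg
    exact Or.inl ⟨hr, by simpa [hxrn] using sub_mem hx hr⟩
  by_cases hmg : m = g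
  · subst hmg
    exact Or.inl ⟨by simpa [hxrn] using sub_mem hx hn, hn⟩
  have hsup : x ∈ ⨆ (j) (_ : j ≠ g), ℬ j := hxrn ▸ add_mem
    (AddSubgroup.mem_iSup_of_mem h (AddSubgroup.mem_iSup_of_mem hhg hr))
    (AddSubgroup.mem_iSup_of_mem m (AddSubgroup.mem_iSup_of_mem hmg hn))
  exact Or.inr (AddSubgroup.disjoint_def.1 (hℬ.iSupIndep g) hx hsup)

lemma exists_mem_inv_of_eq_mul_mul (hℬ : IsSubgrading ℬ) {g k : G} {r a : R} (hr : r ∈ ℬ g)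
    (ha : a ∈ ℬ k) (hra : r = r * a * r) : ∃ b ∈ ℬ g⁻¹, r = r * b * r := by
  by_cases hk : k = g⁻¹
  · exact ⟨a, hk ▸ ha, hra⟩
  have hgkg : g ≠ g * k * g := fun h ↦ hk <| eq_inv_of_mul_eq_one_left <| by
    rwa [eq_comm, mul_assoc, mul_eq_left] at h
  have hr0 : r = 0 := hℬ.eq_zero_of_mem_of_mem hgkg hr (hra ▸ hℬ.mul_mem (hℬ.mul_mem hr ha) hr)
  exact ⟨0, zero_mem _, by simp [hr0]⟩

lemma hasGradedNRDecomp (hℬ : IsSubgrading ℬ) (hc : GradedNRClean ℬ) {g : G} {x : R}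
    (hx : x ∈ ℬ g) : HasGradedNRDecomp ℬ g x := by
  obtain ⟨r, n, ⟨⟨h, hr⟩, a, ⟨k, ha⟩, hra⟩, ⟨m, hn⟩, hnil, hxrn⟩ := hc x ⟨g, hx⟩
  rcases hℬ.mem_and_mem_or_eq_zero hx hr hn hxrn with ⟨hrg, hng⟩ | rfl
  · obtain ⟨b, hb, hrb⟩ := hℬ.exists_mem_inv_of_eq_mul_mul hrg ha hra
    exact ⟨r, b, n, hrg, hb, hng, hrb, hnil, hxrn⟩
  · exact ⟨0, 0, 0, zero_mem _, zero_mem _, zero_mem _, by simp, .zero, by simp⟩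

theorem gradedNRClean_iff (hℬ : IsSubgrading ℬ) :
    GradedNRClean ℬ ↔ ∀ (g : G) (x : R), x ∈ ℬ g → HasGradedNRDecomp ℬ g x := by
  refine ⟨fun hc g x hx ↦ hℬ.hasGradedNRDecomp hc hx, fun h x ⟨g, hx⟩ ↦ ?_⟩
  obtain ⟨r, a, n, hr, ha, hn, hra, hnil, hxrn⟩ := h g x hx
  exact ⟨r, n, ⟨⟨g, hr⟩, a, ⟨g⁻¹, ha⟩, hra⟩, ⟨g, hn⟩, hnil, hxrn⟩

end IsSubgrading

lemma eq_add_mul_add_mul_add_of_orthogonal {r₁ a₁ r₂ a₂ : R} (h₁ : r₁ = r₁ * a₁ * r₁)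
    (h₂ : r₂ = r₂ * a₂ * r₂) (hr₁a₂ : r₁ * a₂ = 0) (hr₂a₁ : r₂ * a₁ = 0) (ha₁r₂ : a₁ * r₂ = 0)
    (ha₂r₁ : a₂ * r₁ = 0) : r₁ + r₂ = (r₁ + r₂) * (a₁ + a₂) * (r₁ + r₂) := by
  simp only [add_mul, mul_add, hr₁a₂, hr₂a₁, mul_assoc, ha₁r₂, ha₂r₁, mul_zero,
    add_zero, zero_add]
  rw [← mul_assoc, ← h₁, ← mul_assoc, ← h₂]

lemma mul_eq_zero_and_mul_eq_zero_of_orthogonal {e e' u v : R} (hec : e ∈ Set.center R)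
    (hee' : e * e' = 0) (hu : e * u = u) (hv : e' * v = v) : u * v = 0 ∧ v * u = 0 := by
  have he := Set.mem_center_iff.1 hec
  constructor
  · rw [← hu, ← hv, (he.comm u).eq, mul_assoc, ← mul_assoc e, hee', zero_mul, mul_zero]
  · calc v * u = v * (e * u) := by rw [hu]
      _ = e * (e' * v) * u := by rw [← mul_assoc, ← (he.comm v).eq, hv]
      _ = 0 := by rw [← mul_assoc, hee', zero_mul, zero_mul]

section Corner

variable {𝒜 : G → AddSubgroup R} {e : R}

lemma mem_map_mulLeft_iff (h𝒜 : IsSubgrading 𝒜) (he1 : e ∈ 𝒜 1) (he : IsIdempotentElem e)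
    {g : G} {u : R} : u ∈ (𝒜 g).map (AddMonoidHom.mulLeft e) ↔ u ∈ 𝒜 g ∧ e * u = u := by
  constructor
  · rintro ⟨y, hy, rfl⟩
    exact ⟨by simpa using h𝒜.mul_mem he1 hy, by simp [← mul_assoc, he.eq]⟩
  · rintro ⟨hu, heu⟩
    exact ⟨u, hu, heu⟩

lemma IsSubgrading.map_mulLeft (h𝒜 : IsSubgrading 𝒜) (he1 : e ∈ 𝒜 1)
    (he : IsIdempotentElem e) : IsSubgrading fun g ↦ (𝒜 g).map (AddMonoidHom.mulLeft e) where
  mul_mem {_ _ _ _} hu hv := by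
    rw [mem_map_mulLeft_iff h𝒜 he1 he] at hu hv ⊢
    exact ⟨h𝒜.mul_mem hu.1 hv.1, by rw [← mul_assoc, hu.2]⟩
  iSupIndep := h𝒜.iSupIndep.mono fun _ _ hu ↦ ((mem_map_mulLeft_iff h𝒜 he1 he).1 hu).1

lemma GradedNRClean.map_mulLeft (h𝒜 : IsSubgrading 𝒜) (he1 : e ∈ 𝒜 1)
    (hec : e ∈ Set.center R) (he : IsIdempotentElem e) (hc : GradedNRClean 𝒜) :
    GradedNRClean fun g ↦ (𝒜 g).map (AddMonoidHom.mulLeft e) := by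
  have hcorner (s t : R) : e * s * (e * t) = e * (s * t) := by
    rw [mul_assoc, ← (Set.mem_center_iff.1 hec).left_comm s t, ← mul_assoc, he.eq]
  rintro _ ⟨g, y, hy, rfl⟩
  obtain ⟨r, n, ⟨⟨h, hr⟩, a, ⟨k, ha⟩, hra⟩, ⟨m, hn⟩, hnil, hyrn⟩ :=
    hc (e * y) ⟨g, ((mem_map_mulLeft_iff h𝒜 he1 he).1 ⟨y, hy, rfl⟩).1⟩
  refine ⟨e * r, e * n, ⟨⟨h, r, hr, rfl⟩, e * a, ⟨k, a, ha, rfl⟩, ?_⟩, ⟨m, n, hn, rfl⟩,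
    ((Set.mem_center_iff.1 hec).comm n).isNilpotent_mul_left hnil, ?_⟩
  · rw [hcorner, hcorner, ← hra]
  · simp only [AddMonoidHom.coe_mulLeft]
    rw [← mul_add, ← hyrn, ← mul_assoc, he.eq]

lemma HasGradedNRDecomp.add_of_mul_eq_zero {e' : R} (h𝒜 : IsSubgrading 𝒜) (he1 : e ∈ 𝒜 1)
    (he'1 : e' ∈ 𝒜 1) (he : IsIdempotentElem e) (he' : IsIdempotentElem e')
    (hec : e ∈ Set.center R) (hee' : e * e' = 0) {g : G} {u v : R}
    (hu : HasGradedNRDecomp (fun g ↦ (𝒜 g).map (AddMonoidHom.mulLeft e)) g u)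
    (hv : HasGradedNRDecomp (fun g ↦ (𝒜 g).map (AddMonoidHom.mulLeft e')) g v) :
    HasGradedNRDecomp 𝒜 g (u + v) := by
  obtain ⟨r₁, a₁, n₁, hr₁, ha₁, hn₁, hra₁, hnil₁, rfl⟩ := hu
  obtain ⟨r₂, a₂, n₂, hr₂, ha₂, hn₂, hra₂, hnil₂, rfl⟩ := hv
  simp only [mem_map_mulLeft_iff h𝒜 he1 he, mem_map_mulLeft_iff h𝒜 he'1 he'] at *
  have orth {x y : R} (hx : e * x = x) (hy : e' * y = y) :=
    mul_eq_zero_and_mul_eq_zero_of_orthogonal hec hee' hx hy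
  have hn₁₂ : Commute n₁ n₂ := (orth hn₁.2 hn₂.2).1.trans (orth hn₁.2 hn₂.2).2.symm
  refine ⟨r₁ + r₂, a₁ + a₂, n₁ + n₂, add_mem hr₁.1 hr₂.1, add_mem ha₁.1 ha₂.1,
    add_mem hn₁.1 hn₂.1, ?_, hn₁₂.isNilpotent_add hnil₁ hnil₂, by abel⟩
  exact eq_add_mul_add_mul_add_of_orthogonal hra₁ hra₂ (orth hr₁.2 ha₂.2).1
    (orth ha₁.2 hr₂.2).2 (orth ha₁.2 hr₂.2).1 (orth hr₁.2 ha₂.2).2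

end Corner

end

/-- For a central homogeneous idempotent `f`, the ring `R` is graded
NR-clean iff the corner rings `fR` and `(1-f)R` (with components `fR_g` and `(1-f)R_g`)
are graded NR-clean. -/
theorem stmt12 {G : Type*} [Group G] [DecidableEq G] {R : Type*} [Ring R]
    (𝒜 : G → AddSubgroup R) (hG : IsGrading 𝒜) (f : R)
    (hf1 : f ∈ 𝒜 1) (hfc : f ∈ Set.center R) (hfi : f * f = f) :
    GradedNRClean 𝒜 ↔
      (GradedNRClean (fun g => (𝒜 g).map (AddMonoidHom.mulLeft f)) ∧
        GradedNRClean (fun g => (𝒜 g).map (AddMonoidHom.mulLeft (1 - f)))) := by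
  have h𝒜 := hG.isSubgrading
  have hf : IsIdempotentElem f := hfi
  have hf1' : 1 - f ∈ 𝒜 1 := sub_mem hG.one_mem hf1
  have hfc' : 1 - f ∈ Set.center R := (Subring.center R).sub_mem (Subring.center R).one_mem hfc
  refine ⟨fun hc ↦ ⟨hc.map_mulLeft h𝒜 hf1 hfc hf, hc.map_mulLeft h𝒜 hf1' hfc' hf.one_sub⟩,
    fun ⟨h₁, h₂⟩ ↦ h𝒜.gradedNRClean_iff.2 fun g x hx ↦ ?_⟩
  have hx₁ := (h𝒜.map_mulLeft hf1 hf).hasGradedNRDecomp h₁ ⟨x, hx, rfl⟩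
  have hx₂ := (h𝒜.map_mulLeft hf1' hf.one_sub).hasGradedNRDecomp h₂ ⟨x, hx, rfl⟩
  rw [show x = f * x + (1 - f) * x by rw [← add_mul, add_sub_cancel, one_mul]]
  exact hx₁.add_of_mul_eq_zero h𝒜 hf1 hf1' hf hf.one_sub hfc hf.mul_one_sub_self hx₂
end

section
/- Let f_1, …, f_n be pairwise orthogonal central homogeneous idempotents of a G-graded ring R with f_1 + ⋯ + f_n = 1. Then R is graded NR-clean if and only if each corner ring f_iR is graded NR-clean. -/
/-!
Multiplication by the central idempotents `f i` splits `R` into the corners `f i R`, which are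
mutually orthogonal. An NR-clean decomposition in `R` restricts to each corner by multiplying with
`f i`. Conversely, a decomposition of `f i x` in a corner may have summands of the wrong degree.
Projecting them to the degree `g` of `x`, and the regularity witness to degree `g⁻¹`, still gives a
decomposition: if `r = r w r` with `r` of degree `g` and `w` of degree `h`, then `r` also has
degree `g h g`, so `r = 0` unless `h = g⁻¹`. Decompositions of the `f i x` of these fixed degrees
add up to a decomposition of `x = ∑ i, f i x`, because products of terms from different corners
vanish.
-/

section OrthogonalIdempotents

variable {R : Type*} [Ring R]

lemma mul_eq_zero_of_mul_eq_zero_of_mem_center {e e' u v : R} (he' : e' ∈ Set.center R)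
    (h0 : e * e' = 0) (hu : e * u = u) (hv : e' * v = v) : u * v = 0 := by
  have hcomm : Commute e' u := (Set.mem_center_iff.mp he').comm u
  calc u * v = e * u * (e' * v) := by rw [hu, hv]
    _ = e * (u * e') * v := by simp only [mul_assoc]
    _ = 0 := by rw [← hcomm.eq, ← mul_assoc, h0, zero_mul, zero_mul]

lemma sum_mul_sum_of_orthogonal {ι : Type*} [Fintype ι] {f : ι → R}
    (hfc : ∀ i, f i ∈ Set.center R) (horth : ∀ i j, i ≠ j → f i * f j = 0) {u v : ι → R}
    (hu : ∀ i, f i * u i = u i) (hv : ∀ i, f i * v i = v i) :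
    (∑ i, u i) * (∑ i, v i) = ∑ i, u i * v i := by
  rw [Finset.sum_mul_sum]
  refine Finset.sum_congr rfl fun i _ => Finset.sum_eq_single i (fun j _ hji => ?_) (by simp)
  exact mul_eq_zero_of_mul_eq_zero_of_mem_center (hfc j) (horth i j (Ne.symm hji)) (hu i) (hv j)

end OrthogonalIdempotents

section Corner

variable {G : Type*} [Group G] {R : Type*} [Ring R] {𝒜 : G → AddSubgroup R}

def cornerGrading (𝒜 : G → AddSubgroup R) (e : R) (g : G) : AddSubgroup R :=
  (𝒜 g).map (AddMonoidHom.mulLeft e)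

lemma mem_cornerGrading_iff [DecidableEq G] (hG : IsGrading 𝒜) {e : R} (he1 : e ∈ 𝒜 1)
    (he : IsIdempotentElem e) {g : G} {z : R} :
    z ∈ cornerGrading 𝒜 e g ↔ z ∈ 𝒜 g ∧ e * z = z := by
  constructor
  · rintro ⟨y, hy, rfl⟩
    exact ⟨by simpa using hG.mul_mem he1 hy, by simp [← mul_assoc, he.eq]⟩
  · rintro ⟨hz, hez⟩
    exact ⟨z, hz, hez⟩

lemma GradedRegular.mul_left_corner {e r : R} (hc : e ∈ Set.center R) (he : IsIdempotentElem e)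
    (hr : GradedRegular 𝒜 r) : GradedRegular (cornerGrading 𝒜 e) (e * r) := by
  obtain ⟨⟨a, ha⟩, w, ⟨h, hw⟩, hrwr⟩ := hr
  refine ⟨⟨a, r, ha, rfl⟩, e * w, ⟨h, w, hw, rfl⟩, ?_⟩
  have hmul : ∀ u v : R, e * u * (e * v) = e * (u * v) := fun u v => by
    rw [mul_assoc, ← mul_assoc u, ← ((Set.mem_center_iff.mp hc).comm u).eq, mul_assoc,
      ← mul_assoc, he.eq]
  rw [hmul, hmul, ← hrwr]

lemma GradedNRClean.corner [DecidableEq G] (hG : IsGrading 𝒜) {e : R} (he1 : e ∈ 𝒜 1)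
    (hc : e ∈ Set.center R) (he : IsIdempotentElem e) (hR : GradedNRClean 𝒜) :
    GradedNRClean (cornerGrading 𝒜 e) := by
  rintro x ⟨g, hx⟩
  obtain ⟨hxg, hex⟩ := (mem_cornerGrading_iff hG he1 he).1 hx
  obtain ⟨r, m, hr, ⟨b, hm⟩, hnil, rfl⟩ := hR x ⟨g, hxg⟩
  exact ⟨e * r, e * m, hr.mul_left_corner hc he, ⟨b, m, hm, rfl⟩,
    ((Set.mem_center_iff.mp hc).comm m).isNilpotent_mul_left hnil, by rw [← mul_add, hex]⟩

end Corner

section Decomposition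

open DirectSum

variable {G : Type*} [Group G] [DecidableEq G] {R : Type*} [Ring R] {𝒜 : G → AddSubgroup R}
  [Decomposition 𝒜]

lemma decompose_eq_self_or_zero {y : R} (hy : Homogeneous 𝒜 y) (g : G) :
    (decompose 𝒜 y g : R) = y ∨ (decompose 𝒜 y g : R) = 0 := by
  obtain ⟨a, ha⟩ := hy
  by_cases hag : a = g
  · subst hag
    exact .inl (decompose_of_mem_same 𝒜 ha)
  · exact .inr (decompose_of_mem_ne 𝒜 ha hag)

lemma decompose_eq_decompose_mul_decompose_inv_mul_decompose (hG : IsGrading 𝒜) {r w : R}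
    (hr : Homogeneous 𝒜 r) (hw : Homogeneous 𝒜 w) (hrwr : r = r * w * r) (g : G) :
    (decompose 𝒜 r g : R) = decompose 𝒜 r g * decompose 𝒜 w g⁻¹ * decompose 𝒜 r g := by
  obtain ⟨a, hra⟩ := hr
  obtain ⟨h, hwh⟩ := hw
  by_cases hag : a = g
  · subst hag
    rw [decompose_of_mem_same 𝒜 hra]
    by_cases hh : h = a⁻¹
    · subst hh
      rwa [decompose_of_mem_same 𝒜 hwh]
    · have hr' : r ∈ 𝒜 (a * h * a) := hrwr ▸ hG.mul_mem (hG.mul_mem hra hwh) hra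
      have hr0 : r = 0 := by
        by_contra hr0
        exact hh (eq_inv_of_mul_eq_one_right
          (mul_right_cancel ((degree_eq_of_mem_mem 𝒜 hr' hra hr0).trans (one_mul a).symm)))
      simp [hr0]
  · simp [decompose_of_mem_ne 𝒜 hra hag]

end Decomposition

section Splitting

variable {G : Type*} [Group G] {R : Type*} [Ring R] {𝒜 : G → AddSubgroup R}

/-- Fixing the degrees of `r`, `m` and of the witness `w` is what lets such decompositions be
added. -/
structure IsGradedNRSplitting (𝒜 : G → AddSubgroup R) (g : G) (x r w m : R) : Prop where
  r_mem : r ∈ 𝒜 g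
  w_mem : w ∈ 𝒜 g⁻¹
  regular : r = r * w * r
  m_mem : m ∈ 𝒜 g
  isNilpotent : IsNilpotent m
  eq_add : x = r + m

lemma IsGradedNRSplitting.sum {ι : Type*} [Fintype ι] {f : ι → R}
    (hfc : ∀ i, f i ∈ Set.center R) (horth : ∀ i j, i ≠ j → f i * f j = 0) {g : G}
    {x r w m : ι → R} (hs : ∀ i, IsGradedNRSplitting 𝒜 g (x i) (r i) (w i) (m i))
    (hr : ∀ i, f i * r i = r i) (hw : ∀ i, f i * w i = w i) (hm : ∀ i, f i * m i = m i) :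
    IsGradedNRSplitting 𝒜 g (∑ i, x i) (∑ i, r i) (∑ i, w i) (∑ i, m i) where
  r_mem := sum_mem fun i _ => (hs i).r_mem
  w_mem := sum_mem fun i _ => (hs i).w_mem
  regular := by
    rw [sum_mul_sum_of_orthogonal hfc horth hr hw,
      sum_mul_sum_of_orthogonal hfc horth (fun i => by rw [← mul_assoc, hr]) hr]
    exact Finset.sum_congr rfl fun i _ => (hs i).regular
  m_mem := sum_mem fun i _ => (hs i).m_mem
  isNilpotent := by
    refine Commute.isNilpotent_sum (fun i _ => (hs i).isNilpotent) fun i j _ _ => ?_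
    by_cases hij : i = j
    · subst hij
      exact Commute.refl _
    · rw [Commute, SemiconjBy,
        mul_eq_zero_of_mul_eq_zero_of_mem_center (hfc j) (horth i j hij) (hm i) (hm j),
        mul_eq_zero_of_mul_eq_zero_of_mem_center (hfc i) (horth j i (Ne.symm hij)) (hm j) (hm i)]
  eq_add := by
    simp only [fun i => (hs i).eq_add]
    exact Finset.sum_add_distrib

lemma exists_isGradedNRSplitting_mul_left [DecidableEq G] [DirectSum.Decomposition 𝒜]
    (hG : IsGrading 𝒜) {e : R} (he1 : e ∈ 𝒜 1) (he : IsIdempotentElem e)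
    (hclean : GradedNRClean (cornerGrading 𝒜 e)) {g : G} {x : R} (hx : x ∈ 𝒜 g) :
    ∃ r w m, IsGradedNRSplitting 𝒜 g (e * x) r w m ∧ e * r = r ∧ e * w = w ∧ e * m = m := by
  have hmem : ∀ {k z}, z ∈ cornerGrading 𝒜 e k ↔ z ∈ 𝒜 k ∧ e * z = z :=
    mem_cornerGrading_iff hG he1 he
  have hex : e * x ∈ cornerGrading 𝒜 e g := ⟨x, hx, rfl⟩
  obtain ⟨r, m, ⟨⟨a, hra⟩, w, ⟨h, hwh⟩, hrwr⟩, ⟨b, hmb⟩, hnil, hdec⟩ := hclean (e * x) ⟨g, hex⟩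
  obtain ⟨hr, her⟩ := hmem.1 hra
  obtain ⟨hw, hew⟩ := hmem.1 hwh
  obtain ⟨hm, hem⟩ := hmem.1 hmb
  have hfix : ∀ {y : R}, Homogeneous 𝒜 y → e * y = y → ∀ k,
      e * (DirectSum.decompose 𝒜 y k : R) = DirectSum.decompose 𝒜 y k := fun hy hey k => by
    rcases decompose_eq_self_or_zero hy k with h | h <;> rw [h]
    exacts [hey, mul_zero e]
  refine ⟨_, _, _, ⟨(DirectSum.decompose 𝒜 r g).2, (DirectSum.decompose 𝒜 w g⁻¹).2,
    decompose_eq_decompose_mul_decompose_inv_mul_decompose hG ⟨a, hr⟩ ⟨h, hw⟩ hrwr g,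
    (DirectSum.decompose 𝒜 m g).2, ?_, ?_⟩, hfix ⟨a, hr⟩ her g, hfix ⟨h, hw⟩ hew g⁻¹,
    hfix ⟨b, hm⟩ hem g⟩
  · rcases decompose_eq_self_or_zero ⟨b, hm⟩ g with h | h <;> rw [h]
    exacts [hnil, IsNilpotent.zero]
  · rw [← DirectSum.decompose_of_mem_same 𝒜 (hmem.1 hex).1, hdec, DirectSum.decompose_add,
      DirectSum.add_apply, AddMemClass.coe_add]

lemma GradedNRClean.of_forall_corner [DecidableEq G] (hG : IsGrading 𝒜) {ι : Type*} [Fintype ι]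
    {f : ι → R} (hfhom : ∀ i, f i ∈ 𝒜 1) (hfc : ∀ i, f i ∈ Set.center R)
    (hfi : ∀ i, IsIdempotentElem (f i)) (horth : ∀ i j, i ≠ j → f i * f j = 0)
    (hsum : ∑ i, f i = 1) (hC : ∀ i, GradedNRClean (cornerGrading 𝒜 (f i))) :
    GradedNRClean 𝒜 := by
  let := hG.isInternal.chooseDecomposition
  rintro x ⟨g, hx⟩
  choose r w m hs hr hw hm using
    fun i => exists_isGradedNRSplitting_mul_left hG (hfhom i) (hfi i) (hC i) hx
  have hsplit := IsGradedNRSplitting.sum hfc horth hs hr hw hm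
  rw [← Finset.sum_mul, hsum, one_mul] at hsplit
  exact ⟨_, _, ⟨⟨g, hsplit.r_mem⟩, _, ⟨g⁻¹, hsplit.w_mem⟩, hsplit.regular⟩, ⟨g, hsplit.m_mem⟩,
    hsplit.isNilpotent, hsplit.eq_add⟩

end Splitting

/-- For pairwise orthogonal central homogeneous idempotents `f 1, …, f n`
summing to `1`, the ring `R` is graded NR-clean iff each corner ring `f i • R` is
graded NR-clean. -/
theorem stmt13 {G : Type*} [Group G] [DecidableEq G] {R : Type*} [Ring R]
    (𝒜 : G → AddSubgroup R) (hG : IsGrading 𝒜) {n : ℕ} (f : Fin n → R)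
    (hfhom : ∀ i, f i ∈ 𝒜 1) (hfc : ∀ i, f i ∈ Set.center R)
    (hfi : ∀ i, f i * f i = f i) (horth : ∀ i j, i ≠ j → f i * f j = 0)
    (hsum : ∑ i, f i = 1) :
    GradedNRClean 𝒜 ↔
      ∀ i, GradedNRClean (fun g => (𝒜 g).map (AddMonoidHom.mulLeft (f i))) :=
  ⟨fun hR i => hR.corner hG (hfhom i) (hfc i) (hfi i),
    GradedNRClean.of_forall_corner hG hfhom hfc hfi horth hsum⟩
end

section
/- Let R be a G-graded ring, H a normal subgroup of G, and suppose G is a locally finite p-group with p nilpotent in R. If R is G/H-graded NR-clean, then the group ring R[H], viewed as a G/H-graded ring, is G/H-graded NR-clean. -/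
/-- The `G/H`-grading on a `G`-graded ring `R`: the coset component `R_C = ⊕_{x ∈ C} R_x`. -/
def cosetComponent {G : Type*} [Group G] {R : Type*} [Ring R]
    (𝒜 : G → AddSubgroup R) (H : Subgroup G) [H.Normal] (C : G ⧸ H) : AddSubgroup R :=
  ⨆ (x : G) (_ : (x : G ⧸ H) = C), 𝒜 x

/-- The `G/H`-grading on the group ring `R[H]`: the `C`-component consists of those
`∑ r_h h` with all coefficients `r_h ∈ R_C`. -/
def groupRingCosetComponent {G : Type*} [Group G] {R : Type*} [Ring R]
    (𝒜 : G → AddSubgroup R) (H : Subgroup G) [H.Normal] (C : G ⧸ H) :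
    AddSubgroup (MonoidAlgebra R H) where
  carrier := {u | ∀ h : H, u.coeff h ∈ cosetComponent 𝒜 H C}
  zero_mem' := fun h => by simpa using zero_mem (cosetComponent 𝒜 H C)
  add_mem' := fun {a b} ha hb h => by
    show (a + b).coeff h ∈ cosetComponent 𝒜 H C
    rw [MonoidAlgebra.coeff_add, Finsupp.add_apply]
    exact add_mem (ha h) (hb h)
  neg_mem' := fun {a} ha h => by
    show (-a).coeff h ∈ cosetComponent 𝒜 H C
    exact neg_mem (ha h)

/-!
The augmentation `R[H] → R` sends the `C`-component of `R[H]` into `R_C`, and its kernel is nil.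
For a finite `p`-group `P` this goes by induction on `|P|`: for a central `z ≠ 1` the kernel of
`R[P] → R[P/⟨z⟩]` lies in `(z - 1) R[P]`, and `z - 1` is central and nilpotent since
`(z - 1)^(p^k) ∈ p R[P]`; local finiteness reduces the general case to the finite subgroup
generated by a support. Now write the augmentation of a homogeneous `u` of degree `C` as `r + n`
in `R`. The coset components being independent, either `r ∈ R_C`, and `u = r + (u - r)` with
`u - r` of degree `C` and of nilpotent augmentation `n`, or the augmentation of `u` is nilpotent,
and `u = 0 + u`.
-/

open MonoidAlgebra

theorem isNilpotent_sub_one_of_pow_prime_pow_eq_one {A : Type*} [Ring A] {p k : ℕ}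
    (hp : p.Prime) (hpA : IsNilpotent (p : A)) {a : A} (ha : a ^ p ^ k = 1) :
    IsNilpotent (a - 1) := by
  obtain ⟨s, hs⟩ := (Commute.one_right (a - 1)).exists_add_pow_prime_pow_eq hp k
  rw [sub_add_cancel, ha, one_pow, mul_one, add_comm _ (1 : A), add_assoc,
    left_eq_add, ← eq_neg_iff_add_eq_zero, mul_assoc] at hs
  refine IsNilpotent.of_pow (m := p ^ k) ?_
  rw [hs, isNilpotent_neg_iff]
  exact (Nat.cast_commute p _).isNilpotent_mul_right hpA

theorem Subgroup.normal_zpowers_of_mem_center {P : Type*} [Group P] {z : P}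
    (hz : z ∈ Subgroup.center P) : (Subgroup.zpowers z).Normal :=
  ⟨fun a ha g => by
    obtain ⟨k, rfl⟩ := Subgroup.mem_zpowers_iff.mp ha
    rw [Subgroup.mem_center_iff.mp (Subgroup.zpow_mem _ hz k) g, mul_inv_cancel_right]
    exact Subgroup.zpow_mem_zpowers z k⟩

def IsLocallyFinite (G : Type*) [Group G] : Prop :=
  ∀ S : Set G, S.Finite → (Subgroup.closure S : Set G).Finite

theorem IsLocallyFinite.subgroup {G : Type*} [Group G] (hG : IsLocallyFinite G)
    (H : Subgroup G) : IsLocallyFinite H := by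
  intro S hS
  have hfin := hG _ (hS.image H.subtype)
  rw [← MonoidHom.map_closure, Subgroup.coe_map] at hfin
  exact hfin.of_finite_image H.subtype_injective.injOn

namespace MonoidAlgebra

section Augmentation

variable (R : Type*) [Semiring R] (P : Type*) [Monoid P]

noncomputable def augmentation : MonoidAlgebra R P →+* R :=
  liftNCRingHom (RingHom.id R) 1 fun _ _ => Commute.one_right _

variable {R P}

@[simp]
theorem augmentation_single (g : P) (r : R) : augmentation R P (single g r) = r := by
  simp [augmentation, liftNCRingHom, liftNC_single]

theorem augmentation_mapDomainRingHom {Q : Type*} [Monoid Q] (f : P →* Q)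
    (x : MonoidAlgebra R P) :
    augmentation R Q (mapDomainRingHom R f x) = augmentation R P x := by
  rw [← RingHom.comp_apply]
  congr 1
  apply ringHom_ext <;> intro a <;> simp [mapDomainRingHom]

theorem augmentation_mem {S : AddSubmonoid R} {u : MonoidAlgebra R P}
    (hu : ∀ g, u.coeff g ∈ S) : augmentation R P u ∈ S := by
  rw [← sum_coeff_single u, Finsupp.sum, map_sum]
  exact sum_mem fun g _ => by simpa using hu g

end Augmentation

variable {R : Type*} [Ring R] {P : Type*} [Group P]

theorem commute_single_one_of_mem_center {z : P} (hz : z ∈ Subgroup.center P)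
    (w : MonoidAlgebra R P) : Commute (single z (1 : R)) w := by
  induction w using MonoidAlgebra.induction_linear with
  | zero => exact Commute.zero_right _
  | add f g hf hg => exact hf.add_right hg
  | single g r =>
    simp only [Commute, SemiconjBy, single_mul_single, one_mul, mul_one,
      Subgroup.mem_center_iff.mp hz g]

theorem exists_eq_single_sub_one_mul_of_mapDomain_eq_zero {z : P}
    (hz : z ∈ Subgroup.center P) (hz_fin : IsOfFinOrder z) {N : Subgroup P} [N.Normal]
    (hN : N ≤ Subgroup.zpowers z) {v : MonoidAlgebra R P}
    (hv : mapDomainRingHom R (QuotientGroup.mk' N) v = 0) :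
    ∃ y, v = (single z 1 - 1) * y := by
  set a : MonoidAlgebra R P := single z 1
  let M := (AddMonoidHom.mulLeft (a - 1)).range
  have hsingle (g : P) (r : R) : single g r - single (g : P ⧸ N).out r ∈ M := by
    obtain ⟨⟨n, hn⟩, hout⟩ := QuotientGroup.mk_out_eq_mul N g
    obtain ⟨j, hj : z ^ j = n⁻¹⟩ := hz_fin.mem_powers_iff_mem_zpowers.mpr (hN (inv_mem hn))
    have hg : single g r = single (g : P ⧸ N).out r * a ^ j := by
      rw [single_pow, one_pow, single_mul_single, mul_one, hj, hout, mul_inv_cancel_right]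
    have hc : Commute (a - 1) (single (g : P ⧸ N).out r) :=
      (commute_single_one_of_mem_center hz _).sub_left (Commute.one_left _)
    refine ⟨single (g : P ⧸ N).out r * ∑ i ∈ Finset.range j, a ^ i, ?_⟩
    rw [hg, AddMonoidHom.coe_mulLeft, ← mul_assoc, hc.eq, mul_assoc, mul_geom_sum, mul_sub_one]
  have hsection (w : MonoidAlgebra R P) :
      w - mapDomain Quotient.out (mapDomainRingHom R (QuotientGroup.mk' N) w) ∈ M := by
    induction w using MonoidAlgebra.induction_linear with
    | zero => simp [mapDomain_zero]
    | add f g hf hg =>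
      rw [map_add, mapDomain_add, add_sub_add_comm]
      exact add_mem hf hg
    | single g r => simpa [mapDomainRingHom, mapDomain_single] using hsingle g r
  obtain ⟨y, hy⟩ := hsection v
  exact ⟨y, by simpa [hv, mapDomain_zero] using hy.symm⟩

end MonoidAlgebra

namespace IsPGroup

variable {R : Type*} [Ring R] {P : Type*} [Group P] {p : ℕ}

theorem isNilpotent_of_augmentation_eq_zero [Finite P] (hp : p.Prime) (hP : IsPGroup p P)
    (hpR : IsNilpotent (p : R)) {x : MonoidAlgebra R P} (hx : augmentation R P x = 0) :
    IsNilpotent x := by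
  have := Fact.mk hp
  induction hn : Nat.card P using Nat.strong_induction_on generalizing P with
  | _ n ih =>
  rcases subsingleton_or_nontrivial P with hP1 | hP1
  · have hx1 : x = single 1 (x.coeff 1) := by
      ext g; rw [Subsingleton.elim g 1]; simp
    rw [hx1, augmentation_single] at hx
    rw [hx1, hx, single_zero]
    exact IsNilpotent.zero
  obtain ⟨z, hz, hz1⟩ := SetLike.exists_of_lt hP.bot_lt_center
  have := Subgroup.normal_zpowers_of_mem_center hz
  have hcard : Nat.card (P ⧸ Subgroup.zpowers z) < n := by
    have h1 : 1 < Nat.card (Subgroup.zpowers z) := by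
      rwa [Subgroup.one_lt_card_iff_ne_bot, Ne, Subgroup.zpowers_eq_bot]
    rw [← hn, Subgroup.card_eq_card_quotient_mul_card_subgroup (Subgroup.zpowers z)]
    exact lt_mul_of_one_lt_right Nat.card_pos h1
  set π := mapDomainRingHom R (QuotientGroup.mk' (Subgroup.zpowers z))
  obtain ⟨m, hm⟩ := ih _ hcard (hP.to_quotient _) (x := π x)
    (by rw [augmentation_mapDomainRingHom, hx]) rfl
  obtain ⟨y, hy⟩ := exists_eq_single_sub_one_mul_of_mapDomain_eq_zero hz
    (isOfFinOrder_of_finite z) le_rfl (v := x ^ m) (by rw [map_pow, hm])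
  obtain ⟨k, hk⟩ := hP z
  have hpA : IsNilpotent (p : MonoidAlgebra R P) := by
    simpa using hpR.map (singleOneRingHom : R →+* MonoidAlgebra R P)
  have hz_nil : IsNilpotent (single z (1 : R) - 1) :=
    isNilpotent_sub_one_of_pow_prime_pow_eq_one hp hpA (by rw [single_pow, one_pow, hk]; rfl)
  exact IsNilpotent.of_pow (hy ▸ ((commute_single_one_of_mem_center hz y).sub_left
    (Commute.one_left _)).isNilpotent_mul_right hz_nil)

theorem isNilpotent_of_augmentation_eq_zero_of_isLocallyFinite (hp : p.Prime)
    (hP : IsPGroup p P) (hlf : IsLocallyFinite P) (hpR : IsNilpotent (p : R))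
    {x : MonoidAlgebra R P} (hx : augmentation R P x = 0) : IsNilpotent x := by
  set Q := Subgroup.closure (x.coeff.support : Set P)
  have : Finite Q := (hlf _ x.coeff.support.finite_toSet).to_subtype
  set x' := comapDomain Q.subtype Q.subtype_injective x
  have hx' : mapDomainRingHom R Q.subtype x' = x :=
    mapDomain_comapDomain (by simp [Q, Subgroup.subset_closure]) _
  have hx'0 : augmentation R Q x' = 0 := by
    rw [← augmentation_mapDomainRingHom Q.subtype, hx', hx]
  simpa [hx'] using ((hP.to_subgroup Q).isNilpotent_of_augmentation_eq_zero hp hpR hx'0).map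
    (mapDomainRingHom R Q.subtype)

theorem isNilpotent_of_isNilpotent_augmentation (hp : p.Prime) (hP : IsPGroup p P)
    (hlf : IsLocallyFinite P) (hpR : IsNilpotent (p : R)) {x : MonoidAlgebra R P}
    (hx : IsNilpotent (augmentation R P x)) : IsNilpotent x := by
  obtain ⟨k, hk⟩ := hx
  exact (hP.isNilpotent_of_augmentation_eq_zero_of_isLocallyFinite hp hlf hpR
    (x := x ^ k) (by rw [map_pow, hk])).of_pow

end IsPGroup

theorem AddSubgroup.disjoint_biSup_biSup_of_iSupIndep {ι M : Type*} [AddCommGroup M]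
    {A : ι → AddSubgroup M} (hA : iSupIndep A) {s t : Set ι} (hst : Disjoint s t) :
    Disjoint (⨆ i ∈ s, A i) (⨆ i ∈ t, A i) := by
  have h := (hA.map_orderIso AddSubgroup.toIntSubmodule).disjoint_biSup_biSup hst
  simp only [Function.comp_apply, ← OrderIso.map_iSup] at h
  exact (disjoint_map_orderIso_iff _).mp h

theorem iSupIndep.mem_or_eq_zero_or_eq_zero {ι M : Type*} [AddCommGroup M]
    {S : ι → AddSubgroup M} (hS : iSupIndep S) {i j k : ι} {x r n : M}
    (hx : x ∈ S i) (hr : r ∈ S j) (hn : n ∈ S k) (hxrn : x = r + n) :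
    r ∈ S i ∨ x = 0 ∨ r = 0 := by
  by_cases hji : j = i
  · exact Or.inl (hji ▸ hr)
  by_cases hkj : k = j
  · subst hkj
    exact Or.inr (Or.inl (AddSubgroup.disjoint_def.mp (hS.pairwiseDisjoint (Ne.symm hji)) hx
      (hxrn ▸ add_mem hr hn)))
  · refine Or.inr (Or.inr (AddSubgroup.disjoint_def.mp (hS j) hr ?_))
    have hle (l : ι) (hl : l ≠ j) : S l ≤ ⨆ (l) (_ : l ≠ j), S l :=
      le_iSup₂ (f := fun l _ => S l) l hl
    rw [eq_sub_of_add_eq hxrn.symm]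
    exact sub_mem (hle i (Ne.symm hji) hx) (hle k hkj hn)

theorem GradedRegular.zero {G : Type*} [Group G] {R : Type*} [Ring R]
    (𝒜 : G → AddSubgroup R) : GradedRegular 𝒜 0 :=
  ⟨⟨1, zero_mem _⟩, 0, ⟨1, zero_mem _⟩, by simp⟩

section CosetGrading

variable {G : Type*} [Group G] {R : Type*} [Ring R] {𝒜 : G → AddSubgroup R} {H : Subgroup G}
  [H.Normal]

theorem iSupIndep_cosetComponent [DecidableEq G] (h𝒜 : DirectSum.IsInternal 𝒜) :
    iSupIndep (cosetComponent 𝒜 H) := by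
  rw [iSupIndep_def]
  intro C
  let s : Set G := {x | (x : G ⧸ H) = C}
  have hle : ⨆ (D) (_ : D ≠ C), cosetComponent 𝒜 H D ≤ ⨆ x ∈ sᶜ, 𝒜 x :=
    iSup₂_le fun D hD => iSup₂_le fun x hx =>
      le_iSup₂ (f := fun x (_ : x ∈ sᶜ) => 𝒜 x) x (show (x : G ⧸ H) ≠ C from hx ▸ hD)
  exact (AddSubgroup.disjoint_biSup_biSup_of_iSupIndep h𝒜.addSubgroup_iSupIndep
    (disjoint_compl_right (a := s))).mono_right hle

theorem augmentation_mem_cosetComponent {C : G ⧸ H} {u : MonoidAlgebra R H}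
    (hu : u ∈ groupRingCosetComponent 𝒜 H C) :
    augmentation R H u ∈ cosetComponent 𝒜 H C :=
  augmentation_mem (S := (cosetComponent 𝒜 H C).toAddSubmonoid) hu

theorem single_mem_groupRingCosetComponent {C : G ⧸ H} {r : R}
    (hr : r ∈ cosetComponent 𝒜 H C) (h : H) :
    single h r ∈ groupRingCosetComponent 𝒜 H C := by
  classical
  intro h'
  rw [coeff_single, Finsupp.single_apply]
  split_ifs
  exacts [hr, zero_mem _]

theorem GradedRegular.single_one {r : R} (hr : GradedRegular (cosetComponent 𝒜 H) r) :
    GradedRegular (groupRingCosetComponent 𝒜 H) (single 1 r) := by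
  obtain ⟨⟨C, hrC⟩, a, ⟨D, haD⟩, hra⟩ := hr
  refine ⟨⟨C, single_mem_groupRingCosetComponent hrC 1⟩, single 1 a,
    ⟨D, single_mem_groupRingCosetComponent haD 1⟩, ?_⟩
  rw [single_mul_single, single_mul_single, mul_one, mul_one, ← hra]

end CosetGrading

/-- If `G` is a locally finite `p`-group with `p` nilpotent in `R`, `H` is a
normal subgroup of `G`, and `R` is `G/H`-graded NR-clean, then the group ring `R[H]`
is `G/H`-graded NR-clean. -/
theorem stmt15 {G : Type*} [Group G] [DecidableEq G] {R : Type*} [Ring R]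
    (𝒜 : G → AddSubgroup R) (hG : IsGrading 𝒜) (H : Subgroup G) [H.Normal]
    (p : ℕ) (hp : p.Prime) (hpG : IsPGroup p G)
    (hlf : ∀ S : Set G, S.Finite → ((Subgroup.closure S : Subgroup G) : Set G).Finite)
    (hpR : IsNilpotent (p : R))
    (h : GradedNRClean (cosetComponent 𝒜 H)) :
    GradedNRClean (groupRingCosetComponent 𝒜 H) := by
  have hnil (u : MonoidAlgebra R H) : IsNilpotent (augmentation R H u) → IsNilpotent u :=
    (hpG.to_subgroup H).isNilpotent_of_isNilpotent_augmentation hp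
      (IsLocallyFinite.subgroup hlf H) hpR
  intro u ⟨C, hu⟩
  have hx := augmentation_mem_cosetComponent hu
  obtain ⟨r, n, hr, ⟨Cn, hn⟩, hn_nil, hxrn⟩ := h _ ⟨C, hx⟩
  obtain ⟨Cr, hrCr⟩ := hr.1
  obtain hrC | hx_nil : r ∈ cosetComponent 𝒜 H C ∨ IsNilpotent (augmentation R H u) := by
    rcases (iSupIndep_cosetComponent hG.isInternal).mem_or_eq_zero_or_eq_zero hx hrCr hn hxrn
      with hrC | hx0 | hr0
    exacts [Or.inl hrC, Or.inr (hx0 ▸ IsNilpotent.zero), Or.inr (by rwa [hxrn, hr0, zero_add])]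
  · refine ⟨single 1 r, u - single 1 r, hr.single_one,
      ⟨C, sub_mem hu (single_mem_groupRingCosetComponent hrC 1)⟩, hnil _ ?_, by abel⟩
    rwa [map_sub, augmentation_single, hxrn, add_sub_cancel_left]
  · exact ⟨0, u, GradedRegular.zero _, ⟨C, hu⟩, hnil u hx_nil, (zero_add u).symm⟩
end
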